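/- For all real numbers u, v and p ∈ (1,2), |u+v|^p ≤ |u|^p + |v|^p + p·|v|^(p-1)·|u|. -/

import Mathlib

/-!
For `b ≥ 0` and `1 ≤ p ≤ 2`, the function
`x ↦ x ^ p + b ^ p + p * b ^ (p - 1) * x - (x + b) ^ p` vanishes at `0` and has derivative
`p * (x ^ (p - 1) + b ^ (p - 1) - (x + b) ^ (p - 1))`, which is nonnegative on `x ≥ 0` because
`t ↦ t ^ (p - 1)` is subadditive for `0 ≤ p - 1 ≤ 1`. So it is nonnegative on `x ≥ 0`, and the
real case reduces to this one with `x = |u|`, `b = |v|`, since `|u + v| ≤ |u| + |v|`.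
-/

open Set

namespace Real

lemma monotoneOn_rpow_add_mul_sub_add_rpow {b p : ℝ} (hb : 0 ≤ b) (hp1 : 1 ≤ p) (hp2 : p ≤ 2) :
    MonotoneOn (fun x => x ^ p + b ^ p + p * b ^ (p - 1) * x - (x + b) ^ p) (Ici 0) := by
  have hderiv : ∀ x : ℝ, HasDerivAt (fun x => x ^ p + b ^ p + p * b ^ (p - 1) * x - (x + b) ^ p)
      (p * x ^ (p - 1) + p * b ^ (p - 1) - p * (x + b) ^ (p - 1)) x := fun x =>
    ((((hasDerivAt_id' x).rpow_const (Or.inr hp1)).add_const (b ^ p)).fun_add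
      ((hasDerivAt_id' x).const_mul (p * b ^ (p - 1)))).fun_sub
      (((hasDerivAt_id' x).add_const b).rpow_const (Or.inr hp1)) |>.congr_deriv (by ring)
  refine monotoneOn_of_hasDerivWithinAt_nonneg (convex_Ici 0)
    (fun x _ => (hderiv x).continuousAt.continuousWithinAt)
    (fun x _ => (hderiv x).hasDerivWithinAt) fun x hx => ?_
  rw [interior_Ici] at hx
  have hsubadd : (x + b) ^ (p - 1) ≤ x ^ (p - 1) + b ^ (p - 1) :=
    rpow_add_le_add_rpow hx.le hb (by linarith) (by linarith)
  nlinarith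

lemma add_rpow_le_rpow_add_rpow_add_mul {a b p : ℝ} (ha : 0 ≤ a) (hb : 0 ≤ b) (hp1 : 1 ≤ p)
    (hp2 : p ≤ 2) : (a + b) ^ p ≤ a ^ p + b ^ p + p * b ^ (p - 1) * a := by
  have h := monotoneOn_rpow_add_mul_sub_add_rpow hb hp1 hp2 self_mem_Ici ha ha
  simp only [zero_rpow (by linarith : p ≠ 0), mul_zero, zero_add, add_zero, sub_self] at h
  linarith

end Real

theorem rpow_add_le_of_lt_two (u v p : ℝ) (hp1 : 1 < p) (hp2 : p < 2) :
    |u + v| ^ p ≤ |u| ^ p + |v| ^ p + p * |v| ^ (p - 1) * |u| :=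
  calc |u + v| ^ p ≤ (|u| + |v|) ^ p :=
        Real.rpow_le_rpow (abs_nonneg _) (abs_add_le u v) (by linarith)
    _ ≤ |u| ^ p + |v| ^ p + p * |v| ^ (p - 1) * |u| :=
        Real.add_rpow_le_rpow_add_rpow_add_mul (abs_nonneg u) (abs_nonneg v) hp1.le hp2.le
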